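/- Cell identification (key step in the proofs of Theorems 3.1 and 3.6): for each (d,d') ∈ {0,1}², ℙ-almost surely, 𝔼[ Y·1{D₀=d}·1{D₁=d'} | σ(Z) ] = F_{dd'} ∘ Z, where F_{dd'}(z) := 𝔼[ m(d,d',U)·1{V₀ ∈ S_d(h₀(z))}·1{V₁ ∈ S_{d'}(h₁(z))} ], with S₁(p) := {v : v ≤ p} and S₀(p) := {v : v > p}. In words: the observed conditional mean of the outcome on each joint-treatment cell identifies the average potential outcome over the corresponding region of the unobserved heterogeneity determined by the propensity scores. -/
import Mathlib

open MeasureTheory ProbabilityTheory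


lemma condexp_indep_pair
    {Ω α β : Type*} [MeasurableSpace Ω] [MeasurableSpace α] [MeasurableSpace β]
    (μ : Measure Ω) [IsProbabilityMeasure μ]
    (X : Ω → α) (W : Ω → β) (hX : Measurable X) (hW : Measurable W)
    (hindep : IndepFun X W μ)
    (φ : α × β → ℝ) (hφ : Measurable φ) (C : ℝ) (hC : ∀ p, |φ p| ≤ C) :
    μ[fun ω => φ (X ω, W ω) | MeasurableSpace.comap X inferInstance]
      =ᵐ[μ] fun ω => ∫ w, φ (X ω, w) ∂(μ.map W) := by
  haveI : IsProbabilityMeasure (μ.map X) := Measure.isProbabilityMeasure_map hX.aemeasurable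
  haveI : IsProbabilityMeasure (μ.map W) := Measure.isProbabilityMeasure_map hW.aemeasurable
  have hle : MeasurableSpace.comap X inferInstance ≤ (inferInstance : MeasurableSpace Ω) :=
    hX.comap_le
  set g : α → ℝ := fun a => ∫ w, φ (a, w) ∂(μ.map W) with hg_def
  have hg_sm : StronglyMeasurable g := hφ.stronglyMeasurable.integral_prod_right'
  have hgC : ∀ a, |g a| ≤ C := by
    intro a
    calc |g a| ≤ ∫ w, |φ (a, w)| ∂(μ.map W) := by
          simpa [Real.norm_eq_abs] using norm_integral_le_integral_norm (fun w => φ (a, w)) (μ := μ.map W)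
      _ ≤ ∫ _, C ∂(μ.map W) := by
          refine integral_mono_of_nonneg (ae_of_all _ fun w => abs_nonneg _)
            (integrable_const C) (ae_of_all _ fun w => hC _)
      _ = C := by simp
  have hfmeas : Measurable fun ω => φ (X ω, W ω) := hφ.comp (hX.prodMk hW)
  have hf_int : Integrable (fun ω => φ (X ω, W ω)) μ :=
    Integrable.mono' (integrable_const C) hfmeas.aestronglyMeasurable
      (ae_of_all _ fun ω => by simpa using hC (X ω, W ω))
  have hgX_int : Integrable (fun ω => g (X ω)) μ :=
    Integrable.mono' (integrable_const C)
      ((hg_sm.measurable.comp hX).aestronglyMeasurable)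
      (ae_of_all _ fun ω => by simpa using hgC (X ω))
  have hprod : μ.map (fun ω => (X ω, W ω)) = (μ.map X).prod (μ.map W) :=
    (indepFun_iff_map_prod_eq_prod_map_map hX.aemeasurable hW.aemeasurable).mp hindep
  refine (ae_eq_condExp_of_forall_setIntegral_eq hle hf_int
    (fun s _ _ => hgX_int.integrableOn)
    (fun s hs _ => ?_)
    ?_).symm
  · -- set integral equality
    obtain ⟨B, hB, rfl⟩ := hs
    set ψ : α × β → ℝ := fun p => Set.indicator B (fun _ => (1:ℝ)) p.1 * φ p with hψ_def
    have hψmeas : Measurable ψ :=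
      ((measurable_const.indicator hB).comp measurable_fst).mul hφ
    have hψC : ∀ p, |ψ p| ≤ |C| := by
      intro p
      by_cases h : p.1 ∈ B
      · simp only [hψ_def, Set.indicator_of_mem h, one_mul]
        exact (hC p).trans (le_abs_self C)
      · simp [hψ_def, Set.indicator_of_notMem h, abs_nonneg]
    have hψint : Integrable ψ ((μ.map X).prod (μ.map W)) :=
      Integrable.mono' (integrable_const |C|) hψmeas.aestronglyMeasurable
        (ae_of_all _ fun p => by simpa using hψC p)
    have hleft : ∫ ω in X ⁻¹' B, φ (X ω, W ω) ∂μ = ∫ p, ψ p ∂((μ.map X).prod (μ.map W)) := by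
      rw [← hprod, integral_map (hX.prodMk hW).aemeasurable hψmeas.aestronglyMeasurable]
      rw [← integral_indicator (hX hB)]
      congr 1
      funext ω
      by_cases h : X ω ∈ B
      · simp [hψ_def, h, Set.indicator_of_mem, Set.indicator_of_mem h]
      · simp [hψ_def, h, Set.indicator_of_notMem, Set.indicator_of_notMem h]
    have hfub : ∫ p, ψ p ∂((μ.map X).prod (μ.map W))
        = ∫ a in B, g a ∂(μ.map X) := by
      rw [integral_prod _ hψint]
      rw [← integral_indicator hB]
      congr 1
      funext a
      by_cases h : a ∈ B
      · simp [hψ_def, Set.indicator_of_mem h, hg_def]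
      · simp [hψ_def, Set.indicator_of_notMem h]
    have hright : ∫ a in B, g a ∂(μ.map X) = ∫ ω in X ⁻¹' B, g (X ω) ∂μ := by
      rw [setIntegral_map hB hg_sm.aestronglyMeasurable hX.aemeasurable]
    rw [hleft, hfub, hright]
  · -- AEStronglyMeasurable'
    exact StronglyMeasurable.aestronglyMeasurable
      (hg_sm.comp_measurable (Measurable.of_comap_le le_rfl))

/-- Cell identification (key step in Theorems 3.1 and 3.6): for each `(d,d') ∈ {0,1}²`,
ℙ-a.s. `𝔼[ Y·1{D₀=d}·1{D₁=d'} | σ(Z) ] = F_{dd'} ∘ Z`, where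
`F_{dd'}(z) = 𝔼[ m(d,d',U)·1{V₀ ∈ S_d(h₀ z)}·1{V₁ ∈ S_{d'}(h₁ z)} ]`,
with `S₁(p) = {v | v ≤ p}` and `S₀(p) = {v | v > p}`. -/
theorem cell_identification
    {Ω 𝒵 𝒰 : Type*} [MeasurableSpace Ω] [MeasurableSpace 𝒵] [MeasurableSpace 𝒰]
    (μ : Measure Ω) [IsProbabilityMeasure μ]
    (Z : Ω → 𝒵) (U : Ω → 𝒰) (V₀ V₁ : Ω → ℝ)
    (hZ : Measurable Z) (hU : Measurable U)
    (hV₀ : Measurable V₀) (hV₁ : Measurable V₁)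
    -- V₀, V₁ uniformly distributed on (0,1)
    (hV₀unif : Measure.map V₀ μ = volume.restrict (Set.Ioo (0:ℝ) 1))
    (hV₁unif : Measure.map V₁ μ = volume.restrict (Set.Ioo (0:ℝ) 1))
    -- measurable threshold functions with values in [0,1]
    (h₀ h₁ : 𝒵 → ℝ) (hh₀ : Measurable h₀) (hh₁ : Measurable h₁)
    (hh₀mem : ∀ z, h₀ z ∈ Set.Icc (0:ℝ) 1) (hh₁mem : ∀ z, h₁ z ∈ Set.Icc (0:ℝ) 1)
    -- bounded measurable outcome function (`true` codes treatment 1, `false` codes 0)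
    (m : Bool → Bool → 𝒰 → ℝ) (hm : ∀ d d', Measurable (m d d'))
    (hm_bdd : ∃ B, ∀ d d' u, |m d d' u| ≤ B)
    -- random assignment: Z independent of (V₀, V₁, U)
    (hindep : IndepFun Z (fun ω => (V₀ ω, V₁ ω, U ω)) μ)
    -- binary treatments and observed outcome
    (D₀ D₁ : Ω → Bool)
    (hD₀ : ∀ ω, D₀ ω = decide (V₀ ω ≤ h₀ (Z ω)))
    (hD₁ : ∀ ω, D₁ ω = decide (V₁ ω ≤ h₁ (Z ω)))
    (Y : Ω → ℝ) (hY : ∀ ω, Y ω = m (D₀ ω) (D₁ ω) (U ω))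
    -- the regions S₁(p) = {v ≤ p}, S₀(p) = {v > p}
    (S : Bool → ℝ → Set ℝ)
    (hS₁ : ∀ p, S true p = {v | v ≤ p}) (hS₀ : ∀ p, S false p = {v | p < v})
    -- the identified function F_{dd'}
    (F : Bool → Bool → 𝒵 → ℝ)
    (hF : ∀ d d' z, F d d' z =
      ∫ ω, m d d' (U ω) * Set.indicator (S d (h₀ z)) (fun _ => (1:ℝ)) (V₀ ω)
        * Set.indicator (S d' (h₁ z)) (fun _ => (1:ℝ)) (V₁ ω) ∂μ) :
    ∀ d d' : Bool,
      μ[fun ω => Y ω * (if D₀ ω = d then (1:ℝ) else 0) * (if D₁ ω = d' then (1:ℝ) else 0) |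
          MeasurableSpace.comap Z inferInstance]
        =ᵐ[μ] fun ω => F d d' (Z ω) := by
  intro d d'
  set W : Ω → ℝ × ℝ × 𝒰 := fun ω => (V₀ ω, V₁ ω, U ω) with hW_def
  have hW : Measurable W := (hV₀.prodMk (hV₁.prodMk hU))
  set φ : 𝒵 × (ℝ × ℝ × 𝒰) → ℝ := fun p =>
    m d d' p.2.2.2 * Set.indicator (S d (h₀ p.1)) (fun _ => (1:ℝ)) p.2.1
      * Set.indicator (S d' (h₁ p.1)) (fun _ => (1:ℝ)) p.2.2.1 with hφ_def
  -- measurability of the indicator pieces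
  have hind : ∀ (b : Bool) (h : 𝒵 → ℝ), Measurable h →
      Measurable (fun q : 𝒵 × ℝ => Set.indicator (S b (h q.1)) (fun _ => (1:ℝ)) q.2) := by
    intro b h hh
    cases b
    · have : (fun q : 𝒵 × ℝ => Set.indicator (S false (h q.1)) (fun _ => (1:ℝ)) q.2)
          = Set.indicator {q : 𝒵 × ℝ | h q.1 < q.2} (fun _ => (1:ℝ)) := by
        funext q
        by_cases hq : h q.1 < q.2 <;> simp [hS₀, Set.indicator, hq]
      rw [this]
      exact measurable_const.indicator (measurableSet_lt (hh.comp measurable_fst) measurable_snd)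
    · have : (fun q : 𝒵 × ℝ => Set.indicator (S true (h q.1)) (fun _ => (1:ℝ)) q.2)
          = Set.indicator {q : 𝒵 × ℝ | q.2 ≤ h q.1} (fun _ => (1:ℝ)) := by
        funext q
        by_cases hq : q.2 ≤ h q.1 <;> simp [hS₁, Set.indicator, hq]
      rw [this]
      exact measurable_const.indicator (measurableSet_le measurable_snd (hh.comp measurable_fst))
  have hφmeas : Measurable φ := by
    have h1 : Measurable fun p : 𝒵 × (ℝ × ℝ × 𝒰) => m d d' p.2.2.2 :=
      (hm d d').comp (measurable_snd.comp (measurable_snd.comp measurable_snd))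
    have h2 : Measurable fun p : 𝒵 × (ℝ × ℝ × 𝒰) =>
        Set.indicator (S d (h₀ p.1)) (fun _ => (1:ℝ)) p.2.1 :=
      (hind d h₀ hh₀).comp (measurable_fst.prodMk (measurable_fst.comp measurable_snd))
    have h3 : Measurable fun p : 𝒵 × (ℝ × ℝ × 𝒰) =>
        Set.indicator (S d' (h₁ p.1)) (fun _ => (1:ℝ)) p.2.2.1 :=
      (hind d' h₁ hh₁).comp
        (measurable_fst.prodMk (measurable_fst.comp (measurable_snd.comp measurable_snd)))
    exact (h1.mul h2).mul h3
  -- bound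
  obtain ⟨B, hB⟩ := hm_bdd
  have hind_le : ∀ (s : Set ℝ) (v : ℝ), |Set.indicator s (fun _ => (1:ℝ)) v| ≤ 1 := by
    intro s v; by_cases h : v ∈ s <;> simp [h]
  have hφC : ∀ p, |φ p| ≤ |B| := by
    intro p
    have h1 := hB d d' p.2.2.2
    have h2 := hind_le (S d (h₀ p.1)) p.2.1
    have h3 := hind_le (S d' (h₁ p.1)) p.2.2.1
    have habs : |φ p| = |m d d' p.2.2.2| * |Set.indicator (S d (h₀ p.1)) (fun _ => (1:ℝ)) p.2.1|
        * |Set.indicator (S d' (h₁ p.1)) (fun _ => (1:ℝ)) p.2.2.1| := by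
      simp [hφ_def, abs_mul]
    rw [habs]
    have hb' : |m d d' p.2.2.2| ≤ |B| := h1.trans (le_abs_self B)
    calc |m d d' p.2.2.2| * |Set.indicator (S d (h₀ p.1)) (fun _ => (1:ℝ)) p.2.1|
        * |Set.indicator (S d' (h₁ p.1)) (fun _ => (1:ℝ)) p.2.2.1|
        ≤ |B| * 1 * 1 :=
          mul_le_mul (mul_le_mul hb' h2 (abs_nonneg _) (abs_nonneg _)) h3 (abs_nonneg _)
            (by positivity)
      _ = |B| := by ring
  -- rewrite the conditioned function
  have hfeq : (fun ω => Y ω * (if D₀ ω = d then (1:ℝ) else 0) * (if D₁ ω = d' then (1:ℝ) else 0))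
      = fun ω => φ (Z ω, W ω) := by
    funext ω
    by_cases h0 : V₀ ω ≤ h₀ (Z ω) <;> by_cases h1 : V₁ ω ≤ h₁ (Z ω) <;>
      cases d <;> cases d' <;>
      simp [hφ_def, hW_def, hY, hD₀, hD₁, hS₁, hS₀, Set.indicator_apply, ← not_le, h0, h1]
  have hmain := condexp_indep_pair μ Z W hZ hW hindep φ hφmeas |B| hφC
  rw [hfeq]
  refine hmain.trans (ae_of_all _ fun ω => ?_)
  show ∫ w, φ (Z ω, w) ∂(μ.map W) = F d d' (Z ω)
  rw [hF d d' (Z ω)]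
  exact integral_map hW.aemeasurable (hφmeas.comp measurable_prodMk_left).aestronglyMeasurable
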